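/- arXiv:1510.08029 — 5 statements merged into one kernel-verified Lean document; each statement's English description precedes it below -/
import Mathlib

section
/- Let K be a nonempty closed convex cone in R^n. Then for every v in R^n, ‖Pi_K(v)‖ = sup over θ in K with ‖θ‖ ≤ 1 of v^T θ. -/
open scoped RealInnerProductSpace

/-!
Since `K` is stable under the dilations `θ ↦ t • θ`, `t ≥ 0`, minimality of `p = Π_K v`
against each ray `t • θ` with `θ ∈ K` gives
`2 t ⟪v, θ⟫ - t² ‖θ‖² ≤ 2 ⟪v, p⟫ - ‖p‖²` for all `t ≥ 0`; optimizing in `t`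
(at `t = ⟪v, θ⟫ / ‖θ‖²`) yields first `⟪v, p⟫ = ‖p‖²` (take `θ = p`) and then
`⟪v, θ⟫ ≤ ‖p‖ ‖θ‖` for all `θ ∈ K`. Hence `‖p‖` bounds the set, and `θ = p / ‖p‖` attains it.
-/

lemma sq_le_mul_of_forall_two_mul_sub_le {s c d : ℝ} (hs : 0 ≤ s) (hc : 0 < c)
    (h : ∀ t : ℝ, 0 ≤ t → 2 * t * s - t ^ 2 * c ≤ d) : s ^ 2 ≤ c * d := by
  have key := h (s / c) (div_nonneg hs hc.le)
  have expand : 2 * (s / c) * s - (s / c) ^ 2 * c = s ^ 2 / c := by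
    field_simp
    ring
  rw [expand, div_le_iff₀ hc] at key
  linarith

section NearestPointInCone

variable {E : Type*} [NormedAddCommGroup E] [InnerProductSpace ℝ E] {K : Set E} {v p θ : E}

lemma two_mul_inner_sub_le_of_isNearest (hK : ∀ c : ℝ, 0 ≤ c → ∀ x ∈ K, c • x ∈ K)
    (hmin : ∀ u ∈ K, ‖v - p‖ ≤ ‖v - u‖) (hθ : θ ∈ K) {t : ℝ} (ht : 0 ≤ t) :
    2 * t * ⟪v, θ⟫ - t ^ 2 * ‖θ‖ ^ 2 ≤ 2 * ⟪v, p⟫ - ‖p‖ ^ 2 := by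
  have hsq : ‖v - p‖ ^ 2 ≤ ‖v - t • θ‖ ^ 2 :=
    pow_le_pow_left₀ (norm_nonneg _) (hmin _ (hK t ht θ hθ)) 2
  rw [norm_sub_sq_real, norm_sub_sq_real, real_inner_smul_right, norm_smul,
    Real.norm_of_nonneg ht] at hsq
  linarith

lemma real_inner_eq_norm_sq_of_isNearest (hK : ∀ c : ℝ, 0 ≤ c → ∀ x ∈ K, c • x ∈ K)
    (hp : p ∈ K) (hmin : ∀ u ∈ K, ‖v - p‖ ≤ ‖v - u‖) : ⟪v, p⟫ = ‖p‖ ^ 2 := by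
  rcases eq_or_ne p 0 with rfl | hp0
  · simp
  have hd : 0 ≤ 2 * ⟪v, p⟫ - ‖p‖ ^ 2 := by
    simpa using two_mul_inner_sub_le_of_isNearest hK hmin hp le_rfl
  have hsq := sq_le_mul_of_forall_two_mul_sub_le (by nlinarith [sq_nonneg ‖p‖])
    (by positivity) fun t ht => two_mul_inner_sub_le_of_isNearest hK hmin hp ht
  nlinarith [sq_nonneg (⟪v, p⟫ - ‖p‖ ^ 2)]

lemma real_inner_le_norm_mul_norm_of_isNearest (hK : ∀ c : ℝ, 0 ≤ c → ∀ x ∈ K, c • x ∈ K)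
    (hp : p ∈ K) (hmin : ∀ u ∈ K, ‖v - p‖ ≤ ‖v - u‖) (hθ : θ ∈ K) :
    ⟪v, θ⟫ ≤ ‖p‖ * ‖θ‖ := by
  rcases le_or_gt ⟪v, θ⟫ 0 with hs | hs
  · exact hs.trans (by positivity)
  rcases eq_or_ne θ 0 with rfl | hθ0
  · simp
  have hbound : ∀ t : ℝ, 0 ≤ t → 2 * t * ⟪v, θ⟫ - t ^ 2 * ‖θ‖ ^ 2 ≤ ‖p‖ ^ 2 := fun t ht => by
    simpa [real_inner_eq_norm_sq_of_isNearest hK hp hmin, two_mul] using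
      two_mul_inner_sub_le_of_isNearest hK hmin hθ ht
  have hsq := sq_le_mul_of_forall_two_mul_sub_le hs.le (by positivity) hbound
  exact abs_le_of_sq_le_sq' (by nlinarith) (by positivity) |>.2

lemma isGreatest_real_inner_unit_of_isNearest (hK : ∀ c : ℝ, 0 ≤ c → ∀ x ∈ K, c • x ∈ K)
    (hp : p ∈ K) (hmin : ∀ u ∈ K, ‖v - p‖ ≤ ‖v - u‖) :
    IsGreatest {r : ℝ | ∃ θ ∈ K, ‖θ‖ ≤ 1 ∧ r = ⟪v, θ⟫} ‖p‖ := by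
  constructor
  · refine ⟨‖p‖⁻¹ • p, hK _ (inv_nonneg.mpr (norm_nonneg _)) p hp, ?_, ?_⟩
    · rw [norm_smul, norm_inv, norm_norm]
      exact inv_mul_le_one_of_le₀ le_rfl (norm_nonneg _)
    · rcases eq_or_ne p 0 with rfl | hp0
      · simp
      rw [real_inner_smul_right, real_inner_eq_norm_sq_of_isNearest hK hp hmin]
      field_simp
  · rintro r ⟨θ, hθ, hθ1, rfl⟩
    calc ⟪v, θ⟫ ≤ ‖p‖ * ‖θ‖ := real_inner_le_norm_mul_norm_of_isNearest hK hp hmin hθ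
      _ ≤ ‖p‖ := mul_le_of_le_one_right (norm_nonneg _) hθ1

end NearestPointInCone

theorem stmt3_general (n : ℕ) (K : Set (EuclideanSpace ℝ (Fin n)))
    (hcone : ∀ (c : ℝ), 0 ≤ c → ∀ x ∈ K, c • x ∈ K)
    (proj : EuclideanSpace ℝ (Fin n) → EuclideanSpace ℝ (Fin n))
    (hproj : ∀ y, proj y ∈ K ∧ ∀ u ∈ K, ‖y - proj y‖ ≤ ‖y - u‖)
    (v : EuclideanSpace ℝ (Fin n)) :
    ‖proj v‖ = sSup {r : ℝ | ∃ θ ∈ K, ‖θ‖ ≤ 1 ∧ r = ⟪v, θ⟫} :=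
  ((isGreatest_real_inner_unit_of_isNearest hcone (hproj v).1 (hproj v).2).csSup_eq).symm

/-- For a nonempty closed convex cone `K ⊆ ℝⁿ`,
`‖Π_K v‖ = sup {⟪v, θ⟫ : θ ∈ K, ‖θ‖ ≤ 1}`. -/
theorem stmt3 (n : ℕ) (K : Set (EuclideanSpace ℝ (Fin n))) (hne : K.Nonempty)
    (hcl : IsClosed K) (hconv : Convex ℝ K)
    (hcone : ∀ (c : ℝ), 0 ≤ c → ∀ x ∈ K, c • x ∈ K)
    (proj : EuclideanSpace ℝ (Fin n) → EuclideanSpace ℝ (Fin n))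
    (hproj : ∀ y, proj y ∈ K ∧ ∀ u ∈ K, ‖y - proj y‖ ≤ ‖y - u‖)
    (v : EuclideanSpace ℝ (Fin n)) :
    ‖proj v‖ = sSup {r : ℝ | ∃ θ ∈ K, ‖θ‖ ≤ 1 ∧ r = ⟪v, θ⟫} :=
  stmt3_general n K hcone proj hproj v
end

section
/- Let K be a nonempty closed convex subset of R^n, μ ∈ R^n, y = μ + ξ for a fixed vector ξ ∈ R^n, and let μ̂ be the projection of y onto K. Then for any u ∈ K, ‖μ̂ − μ‖² − ‖u − μ‖² ≤ (sup over θ in the tangent cone T_{K,u} with ‖θ‖ ≤ 1 of θ^T ξ)², where T_{K,u} is the closure of {t(v − u) : t ≥ 0, v ∈ K}. -/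
/-!
Write `e = μ̂ - u`. The variational inequality `⟪y - μ̂, u - μ̂⟫ ≤ 0` of the projection, expanded
with `y = μ + ξ`, gives `‖μ̂ - μ‖² - ‖u - μ‖² ≤ 2⟪ξ, e⟫ - ‖e‖²`. Since `e` lies in the tangent
cone, so does `e / ‖e‖`, hence `⟪ξ, e⟫ ≤ ‖e‖ s` with `s` the supremum in the statement, and
`2 ‖e‖ s - ‖e‖² ≤ s²`.
-/

open scoped RealInnerProductSpace Pointwise

theorem smul_mem_closure_of_forall_smul_mem {E : Type*} [TopologicalSpace E] [SMul ℝ E]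
    [ContinuousConstSMul ℝ E] {A : Set E} (hA : ∀ c : ℝ, 0 ≤ c → ∀ x ∈ A, c • x ∈ A) :
    ∀ c : ℝ, 0 ≤ c → ∀ x ∈ closure A, c • x ∈ closure A := fun c hc _ hx =>
  closure_mono (Set.smul_set_subset_iff.2 (hA c hc))
    (smul_closure_subset c A (Set.smul_mem_smul_set hx))

section

variable {F : Type*} [NormedAddCommGroup F] [InnerProductSpace ℝ F]

theorem real_inner_le_zero_of_forall_norm_sub_le {K : Set F} (hK : Convex ℝ K) {y m : F}
    (hm : m ∈ K) (hmin : ∀ w ∈ K, ‖y - m‖ ≤ ‖y - w‖) : ∀ w ∈ K, ⟪y - m, w - m⟫ ≤ 0 := by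
  have : Nonempty K := ⟨⟨m, hm⟩⟩
  refine (norm_eq_iInf_iff_real_inner_le_zero hK hm).1 (le_antisymm ?_ ?_)
  · exact le_ciInf fun w => hmin w w.2
  · exact ciInf_le ⟨0, by rintro r ⟨w, rfl⟩; exact norm_nonneg (y - w)⟩ (⟨m, hm⟩ : K)

theorem norm_sub_sq_sub_norm_sub_sq_le {μ ξ m u : F} (hvar : ⟪μ + ξ - m, u - m⟫ ≤ 0) :
    ‖m - μ‖ ^ 2 - ‖u - μ‖ ^ 2 ≤ 2 * ⟪ξ, m - u⟫ - ‖m - u‖ ^ 2 := by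
  have hm : m - μ = (m - u) + (u - μ) := by abel
  have hy : μ + ξ - m = ξ - (m - u) - (u - μ) := by abel
  have hu : u - m = -(m - u) := by abel
  rw [hy, hu, inner_neg_right, inner_sub_left, inner_sub_left, real_inner_self_eq_norm_sq] at hvar
  rw [hm, norm_add_sq_real, real_inner_comm]
  linarith

theorem bddAbove_inner_of_norm_le_one (T : Set F) (ξ : F) :
    BddAbove {r : ℝ | ∃ θ ∈ T, ‖θ‖ ≤ 1 ∧ r = ⟪θ, ξ⟫} := by
  refine ⟨‖ξ‖, ?_⟩
  rintro r ⟨θ, -, hθ, rfl⟩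
  calc ⟪θ, ξ⟫ ≤ ‖θ‖ * ‖ξ‖ := real_inner_le_norm θ ξ
    _ ≤ ‖ξ‖ := mul_le_of_le_one_left (norm_nonneg ξ) hθ

theorem real_inner_le_norm_mul_sSup_of_smul_mem {T : Set F}
    (hT : ∀ c : ℝ, 0 ≤ c → ∀ x ∈ T, c • x ∈ T) {e : F} (he : e ∈ T) (ξ : F) :
    ⟪e, ξ⟫ ≤ ‖e‖ * sSup {r : ℝ | ∃ θ ∈ T, ‖θ‖ ≤ 1 ∧ r = ⟪θ, ξ⟫} := by
  set θ : F := ‖e‖⁻¹ • e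
  obtain ⟨hθ, he_eq⟩ : ‖θ‖ ≤ 1 ∧ ‖e‖ • θ = e := by
    rcases eq_or_ne e 0 with rfl | hne
    · simp [θ]
    · exact ⟨(norm_smul_inv_norm hne).le, smul_inv_smul₀ (norm_ne_zero_iff.2 hne) e⟩
  calc ⟪e, ξ⟫ = ‖e‖ * ⟪θ, ξ⟫ := by rw [← real_inner_smul_left, he_eq]
    _ ≤ _ := by
      gcongr
      exact le_csSup (bddAbove_inner_of_norm_le_one T ξ)
        ⟨θ, hT _ (inv_nonneg.2 (norm_nonneg e)) e he, hθ, rfl⟩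

end

theorem stmt7_general (n : ℕ) (K : Set (EuclideanSpace ℝ (Fin n)))
    (hconv : Convex ℝ K)
    (μ ξ : EuclideanSpace ℝ (Fin n)) (y : EuclideanSpace ℝ (Fin n)) (hy : y = μ + ξ)
    (muhat : EuclideanSpace ℝ (Fin n))
    (hproj : muhat ∈ K ∧ ∀ w ∈ K, ‖y - muhat‖ ≤ ‖y - w‖)
    (u : EuclideanSpace ℝ (Fin n)) (hu : u ∈ K)
    (T : Set (EuclideanSpace ℝ (Fin n)))
    (hT : T = closure {w : EuclideanSpace ℝ (Fin n) |
      ∃ t : ℝ, 0 ≤ t ∧ ∃ v ∈ K, w = t • (v - u)}) :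
    ‖muhat - μ‖ ^ 2 - ‖u - μ‖ ^ 2
      ≤ (sSup {r : ℝ | ∃ θ ∈ T, ‖θ‖ ≤ 1 ∧ r = ⟪θ, ξ⟫}) ^ 2 := by
  obtain ⟨hmK, hmin⟩ := hproj
  subst hy
  have hvar := real_inner_le_zero_of_forall_norm_sub_le hconv hmK hmin u hu
  have hcone : ∀ c : ℝ, 0 ≤ c → ∀ x ∈ T, c • x ∈ T := hT ▸ by
    refine smul_mem_closure_of_forall_smul_mem ?_
    rintro c hc _ ⟨t, ht, v, hv, rfl⟩
    exact ⟨c * t, mul_nonneg hc ht, v, hv, (mul_smul c t (v - u)).symm⟩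
  have he : muhat - u ∈ T :=
    hT ▸ subset_closure ⟨1, zero_le_one, muhat, hmK, (one_smul ℝ _).symm⟩
  set s := sSup {r : ℝ | ∃ θ ∈ T, ‖θ‖ ≤ 1 ∧ r = ⟪θ, ξ⟫}
  calc ‖muhat - μ‖ ^ 2 - ‖u - μ‖ ^ 2 ≤ 2 * ⟪ξ, muhat - u⟫ - ‖muhat - u‖ ^ 2 :=
        norm_sub_sq_sub_norm_sub_sq_le hvar
    _ ≤ 2 * (‖muhat - u‖ * s) - ‖muhat - u‖ ^ 2 := by
        rw [real_inner_comm]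
        gcongr
        exact real_inner_le_norm_mul_sSup_of_smul_mem hcone he ξ
    _ ≤ s ^ 2 := by nlinarith [sq_nonneg (‖muhat - u‖ - s)]

/-- Deterministic bound via the tangent cone: if `μ̂` is the projection of
`y = μ + ξ` onto a nonempty closed convex set `K` and `u ∈ K`, then
`‖μ̂ − μ‖² − ‖u − μ‖² ≤ (sup {⟪θ, ξ⟫ : θ ∈ T_{K,u}, ‖θ‖ ≤ 1})²`,
where `T_{K,u} = closure {t (v − u) : t ≥ 0, v ∈ K}`. -/
theorem stmt7 (n : ℕ) (K : Set (EuclideanSpace ℝ (Fin n))) (hne : K.Nonempty)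
    (hcl : IsClosed K) (hconv : Convex ℝ K)
    (μ ξ : EuclideanSpace ℝ (Fin n)) (y : EuclideanSpace ℝ (Fin n)) (hy : y = μ + ξ)
    (muhat : EuclideanSpace ℝ (Fin n))
    (hproj : muhat ∈ K ∧ ∀ w ∈ K, ‖y - muhat‖ ≤ ‖y - w‖)
    (u : EuclideanSpace ℝ (Fin n)) (hu : u ∈ K)
    (T : Set (EuclideanSpace ℝ (Fin n)))
    (hT : T = closure {w : EuclideanSpace ℝ (Fin n) |
      ∃ t : ℝ, 0 ≤ t ∧ ∃ v ∈ K, w = t • (v - u)}) :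
    ‖muhat - μ‖ ^ 2 - ‖u - μ‖ ^ 2
      ≤ (sSup {r : ℝ | ∃ θ ∈ T, ‖θ‖ ≤ 1 ∧ r = ⟪θ, ξ⟫}) ^ 2 :=
  stmt7_general n K hconv μ ξ y hy muhat hproj u hu T hT
end

section
/- Let u ∈ S_n↑ be a nondecreasing sequence that is constant on each block of a partition (T_1,...,T_k) of {1,...,n} into consecutive intervals, on which u takes strictly increasing values across blocks. Then the tangent cone of S_n↑ at u equals the product cone S↑_{|T_1|} × ... × S↑_{|T_k|} of nondecreasing sequences on each block. -/
/-!
Perturbing a nondecreasing `u` by `s • w` keeps it nondecreasing for all small `s > 0` exactly when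
`w` is nondecreasing on each level set of `u`: strict increases of `u` survive a small perturbation,
and on a level set only the order of `w` matters. Hence the cone `ℝ≥0 • (S↑ - u)` is already the
closed set of such `w`, and the level sets of `u` are the blocks `T_j`, since `c` is injective.
-/

open Filter Topology

theorem Fin.exists_castSucc_le_lt_succ {α : Type*} [LinearOrder α] {k : ℕ} (b : Fin (k + 1) → α)
    {x : α} (h0 : b 0 ≤ x) (hlast : x < b (Fin.last k)) :
    ∃ j : Fin k, b j.castSucc ≤ x ∧ x < b j.succ := by
  classical
  set m := (Finset.univ.filter fun m => b m ≤ x).max' ⟨0, by simpa using h0⟩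
  have hm : b m ≤ x := by simpa using Finset.max'_mem (Finset.univ.filter fun m => b m ≤ x) _
  have hm_ne : m ≠ Fin.last k := by rintro h; rw [h] at hm; exact hlast.not_ge hm
  refine ⟨m.castPred hm_ne, by simpa using hm, ?_⟩
  by_contra! h
  have hle : (m.castPred hm_ne).succ ≤ m := Finset.le_max' _ _ (by simpa using h)
  exact hle.not_gt (by simpa using Fin.castSucc_lt_succ (i := m.castPred hm_ne))

theorem Fin.le_of_castSucc_le_of_lt_succ {α : Type*} [LinearOrder α] {k : ℕ}
    {b : Fin (k + 1) → α} (hb : Monotone b) {j j' : Fin k} {x y : α}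
    (hx : b j.castSucc ≤ x) (hy : y < b j'.succ) (hxy : x ≤ y) : j ≤ j' := by
  by_contra! h
  have : b j'.succ ≤ b j.castSucc := hb (Fin.succ_le_castSucc_iff.2 h)
  exact (hy.trans_le this).not_ge (hx.trans hxy)

theorem eventually_monotone_add_smul {ι : Type*} [Finite ι] [Preorder ι] {u w : ι → ℝ}
    (hu : Monotone u) (hw : ∀ i j, i ≤ j → u i = u j → w i ≤ w j) :
    ∀ᶠ s in 𝓝[>] (0 : ℝ), Monotone (u + s • w) := by
  have hpair : ∀ i j, i ≤ j → ∀ᶠ s in 𝓝[>] (0 : ℝ), u i + s * w i ≤ u j + s * w j := by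
    intro i j hij
    rcases (hu hij).lt_or_eq with hlt | heq
    · have hcont : Continuous fun s : ℝ => (u i + s * w i) - (u j + s * w j) := by fun_prop
      have hlim := hcont.tendsto 0
      simp only [zero_mul, add_zero] at hlim
      filter_upwards [nhdsWithin_le_nhds (hlim.eventually (gt_mem_nhds (sub_neg.2 hlt)))]
        with s hs
      exact (sub_neg.1 hs).le
    · filter_upwards [self_mem_nhdsWithin] with s (hs : 0 < s)
      have := mul_le_mul_of_nonneg_left (hw i j hij heq) hs.le
      linarith
  filter_upwards [eventually_all.2 fun i => eventually_all.2 fun j =>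
    eventually_imp_distrib_left.2 (hpair i j)] with s hs i j hij
  simpa using hs i j hij

section Isotonic

variable {ι : Type*} [Preorder ι]

theorem isClosed_setOf_le_of_eq (u : EuclideanSpace ℝ ι) :
    IsClosed {w : EuclideanSpace ℝ ι | ∀ i j, i ≤ j → u i = u j → w i ≤ w j} := by
  simp only [Set.ofPred_forall]
  exact isClosed_iInter fun i => isClosed_iInter fun j => isClosed_iInter fun _ =>
    isClosed_iInter fun _ =>
      isClosed_le (EuclideanSpace.proj i).continuous (EuclideanSpace.proj j).continuous

theorem cone_sub_isotonic_eq [Finite ι] {u : EuclideanSpace ℝ ι} (hu : Monotone u) :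
    {w : EuclideanSpace ℝ ι | ∃ t : ℝ, 0 ≤ t ∧
        ∃ v ∈ {v : EuclideanSpace ℝ ι | ∀ i j, i ≤ j → v i ≤ v j}, w = t • (v - u)}
      = {w | ∀ i j, i ≤ j → u i = u j → w i ≤ w j} := by
  ext w
  constructor
  · rintro ⟨t, ht, v, hv, rfl⟩ i j hij huij
    simpa [huij, mul_sub] using mul_le_mul_of_nonneg_left (hv i j hij) ht
  · intro hw
    obtain ⟨s, hmono, hs⟩ :=
      ((eventually_monotone_add_smul hu hw).and self_mem_nhdsWithin).exists
    refine ⟨s⁻¹, inv_nonneg.2 hs.le, u + s • w, fun i j hij => by simpa using hmono hij, ?_⟩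
    rw [add_sub_cancel_left, inv_smul_smul₀ hs.ne']

theorem closure_cone_sub_isotonic_eq [Finite ι] {u : EuclideanSpace ℝ ι} (hu : Monotone u) :
    closure {w : EuclideanSpace ℝ ι | ∃ t : ℝ, 0 ≤ t ∧
        ∃ v ∈ {v : EuclideanSpace ℝ ι | ∀ i j, i ≤ j → v i ≤ v j}, w = t • (v - u)}
      = {w | ∀ i j, i ≤ j → u i = u j → w i ≤ w j} := by
  rw [cone_sub_isotonic_eq hu, (isClosed_setOf_le_of_eq u).closure_eq]

end Isotonic

theorem stmt8_general (n k : ℕ)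
    (S : Set (EuclideanSpace ℝ (Fin n)))
    (hS : S = {w : EuclideanSpace ℝ (Fin n) | ∀ i j : Fin n, i ≤ j → w i ≤ w j})
    (b : Fin (k + 1) → ℕ) (hb0 : b 0 = 0) (hbn : b (Fin.last k) = n)
    (hb : StrictMono b)
    (u : EuclideanSpace ℝ (Fin n)) (c : Fin k → ℝ) (hc : StrictMono c)
    (hu : ∀ (j : Fin k) (i : Fin n),
      b j.castSucc ≤ (i : ℕ) → (i : ℕ) < b j.succ → u i = c j) :
    closure {w : EuclideanSpace ℝ (Fin n) |
        ∃ t : ℝ, 0 ≤ t ∧ ∃ v ∈ S, w = t • (v - u)}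
      = {w : EuclideanSpace ℝ (Fin n) | ∀ (j : Fin k) (i i' : Fin n),
          b j.castSucc ≤ (i : ℕ) → (i' : ℕ) < b j.succ → i ≤ i' → w i ≤ w i'} := by
  subst hS
  have hblock (i : Fin n) : ∃ j : Fin k, b j.castSucc ≤ (i : ℕ) ∧ (i : ℕ) < b j.succ :=
    Fin.exists_castSucc_le_lt_succ b (by simp [hb0]) (by simp [hbn])
  have hblock_le {i i' : Fin n} {j j' : Fin k} (hi : b j.castSucc ≤ (i : ℕ))
      (hi' : (i' : ℕ) < b j'.succ) (hii' : i ≤ i') : j ≤ j' :=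
    Fin.le_of_castSucc_le_of_lt_succ hb.monotone hi hi' hii'
  have hu_mono : Monotone u := by
    intro i i' hii'
    obtain ⟨j, hj⟩ := hblock i
    obtain ⟨j', hj'⟩ := hblock i'
    rw [hu j i hj.1 hj.2, hu j' i' hj'.1 hj'.2]
    exact hc.monotone (hblock_le hj.1 hj'.2 hii')
  rw [closure_cone_sub_isotonic_eq hu_mono]
  ext w
  constructor
  · intro hw j i i' hi hi' hii'
    refine hw i i' hii' ?_
    rw [hu j i hi (lt_of_le_of_lt (by exact_mod_cast hii') hi'), hu j i' (hi.trans hii') hi']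
  · intro hw i i' hii' huii'
    obtain ⟨j, hj⟩ := hblock i
    obtain ⟨j', hj'⟩ := hblock i'
    obtain rfl : j = j' := hc.injective (by rw [← hu j i hj.1 hj.2, ← hu j' i' hj'.1 hj'.2, huii'])
    exact hw j i i' hj.1 hj'.2 hii'

/-- Tangent cone of the isotonic cone `S_n↑` at a nondecreasing sequence `u` that is
constant on each block of a partition of `{1,...,n}` into `k` consecutive intervals,
with strictly increasing values across blocks: it equals the product cone
`S↑_{|T₁|} × ... × S↑_{|T_k|}` of within-block nondecreasing sequences. -/
theorem stmt8 (n k : ℕ) (hk : 0 < k)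
    (S : Set (EuclideanSpace ℝ (Fin n)))
    (hS : S = {w : EuclideanSpace ℝ (Fin n) | ∀ i j : Fin n, i ≤ j → w i ≤ w j})
    (b : Fin (k + 1) → ℕ) (hb0 : b 0 = 0) (hbn : b (Fin.last k) = n)
    (hb : StrictMono b)
    (u : EuclideanSpace ℝ (Fin n)) (c : Fin k → ℝ) (hc : StrictMono c)
    (hu : ∀ (j : Fin k) (i : Fin n),
      b j.castSucc ≤ (i : ℕ) → (i : ℕ) < b j.succ → u i = c j) :
    closure {w : EuclideanSpace ℝ (Fin n) |
        ∃ t : ℝ, 0 ≤ t ∧ ∃ v ∈ S, w = t • (v - u)}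
      = {w : EuclideanSpace ℝ (Fin n) | ∀ (j : Fin k) (i i' : Fin n),
          b j.castSucc ≤ (i : ℕ) → (i' : ℕ) < b j.succ → i ≤ i' → w i ≤ w i'} :=
  stmt8_general n k S hS b hb0 hbn hb u c hc hu
end

section
/- Let μ = (μ_1,...,μ_n) be a strictly increasing sequence in R^n with n ≥ 3, and let ε = min(1/2, min_{i=2,...,n−1} (μ_{i+1} − μ_i)/(μ_i − μ_{i−1})) > 0. Define design points x_i = −ε^i for i = 1,...,n. Then x_1 < x_2 < ... < x_n and μ belongs to the cone of convex sequences K^C_{x_1,...,x_n}, i.e., the slopes (μ_i − μ_{i−1})/(x_i − x_{i−1}) are nondecreasing in i. -/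
/-!
With `x_i = -ε^(i+1)` the gaps `x_{i+1} - x_i = ε^(i+1) (1 - ε)` shrink by the factor `ε`
at every step, so the slope inequality at `i` reduces to `ε (μ_i - μ_{i-1}) ≤ μ_{i+1} - μ_i`,
which is exactly what the choice of `ε` as a minimum of the gap ratios guarantees. Capping `ε`
at `1/2` keeps it below `1`, which makes the design points increasing.
-/

lemma neg_pow_succ_sub_neg_pow {R : Type*} [CommRing R] (ε : R) (i : ℕ) :
    -ε ^ (i + 1) - -ε ^ i = ε ^ i * (1 - ε) := by
  ring

section Geometric

variable {K : Type*} [Field K] [LinearOrder K] [IsStrictOrderedRing K]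

lemma div_le_div_mul_of_mul_le {a b g ε : K} (hε : 0 < ε) (hg : 0 < g) (h : ε * a ≤ b) :
    a / g ≤ b / (ε * g) := by
  rw [← mul_div_mul_left a g hε.ne']
  exact div_le_div_of_nonneg_right h (mul_pos hε hg).le

lemma neg_pow_lt_neg_pow_succ {ε : K} (hε : 0 < ε) (hε1 : ε < 1) (i : ℕ) :
    -ε ^ i < -ε ^ (i + 1) :=
  neg_lt_neg (pow_lt_pow_right_of_lt_one₀ hε hε1 i.lt_succ_self)

lemma div_geometric_gap_le {a b ε : K} (hε : 0 < ε) (hε1 : ε < 1) (h : ε * a ≤ b) (k : ℕ) :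
    a / (-ε ^ (k + 1) - -ε ^ k) ≤ b / (-ε ^ (k + 2) - -ε ^ (k + 1)) := by
  rw [neg_pow_succ_sub_neg_pow, neg_pow_succ_sub_neg_pow, pow_succ, mul_comm _ ε, mul_assoc]
  exact div_le_div_mul_of_mul_le hε (mul_pos (pow_pos hε k) (sub_pos.2 hε1)) h

end Geometric

/-- Worst-case geometric design: for a strictly increasing sequence `μ` (`0`-based,
`n ≥ 3`), set `ε = min(1/2, min_{1 ≤ i ≤ n-2} (μ_{i+1} − μ_i)/(μ_i − μ_{i−1}))` and
design points `x_i = −ε^{i+1}`. Then `ε > 0`, the `x_i` are strictly increasing, and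
`μ` is a convex sequence for this design: its successive slopes are nondecreasing. -/
theorem stmt17 (n : ℕ) (hn : 3 ≤ n) (μ : ℕ → ℝ)
    (hμ : ∀ i, i + 1 < n → μ i < μ (i + 1))
    (ε : ℝ)
    (hε : ε = min (1 / 2)
      ((Finset.Icc 1 (n - 2)).inf' (by rw [Finset.nonempty_Icc]; omega)
        fun i => (μ (i + 1) - μ i) / (μ i - μ (i - 1))))
    (x : ℕ → ℝ) (hxdef : ∀ i, x i = -ε ^ (i + 1)) :
    0 < ε ∧ (∀ i, i + 1 < n → x i < x (i + 1))
      ∧ ∀ i, 1 ≤ i → i + 1 < n →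
        (μ i - μ (i - 1)) / (x i - x (i - 1))
          ≤ (μ (i + 1) - μ i) / (x (i + 1) - x i) := by
  have hgap : ∀ i ∈ Finset.Icc 1 (n - 2), 0 < μ i - μ (i - 1) := by
    rintro (_ | k) hk
    · simp at hk
    · simpa using hμ k (by rw [Finset.mem_Icc] at hk; omega)
  have hratio : ∀ i ∈ Finset.Icc 1 (n - 2), 0 < (μ (i + 1) - μ i) / (μ i - μ (i - 1)) :=
    fun i hi => div_pos (sub_pos.2 (hμ i (by rw [Finset.mem_Icc] at hi; omega))) (hgap i hi)
  have hε0 : 0 < ε := hε ▸ lt_min one_half_pos ((Finset.lt_inf'_iff _).2 hratio)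
  have hε1 : ε < 1 := hε ▸ (min_le_left _ _).trans_lt one_half_lt_one
  refine ⟨hε0, fun i _ => by simpa only [hxdef] using neg_pow_lt_neg_pow_succ hε0 hε1 _, ?_⟩
  intro i hi hin
  have hmem : i ∈ Finset.Icc 1 (n - 2) := Finset.mem_Icc.2 ⟨hi, by omega⟩
  have hle : ε ≤ (μ (i + 1) - μ i) / (μ i - μ (i - 1)) :=
    hε ▸ (min_le_right _ _).trans (Finset.inf'_le _ hmem)
  obtain ⟨k, rfl⟩ := Nat.exists_eq_add_of_le' hi
  simpa only [hxdef, Nat.add_sub_cancel, add_assoc, Nat.reduceAdd] using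
    div_geometric_gap_le hε0 hε1 ((le_div_iff₀ (hgap _ hmem)).1 hle) (k + 1)
end

section
/- Let U = ∪_{m=1}^n K_m be the (non-convex) set of unimodal sequences in R^n, μ ∈ R^n, ξ ∈ R^n fixed, y = μ + ξ, and μ̂ any minimizer over U of ‖y − ·‖². Then for every u ∈ U, ‖μ̂ − μ‖ ≤ ‖u − μ‖ + 2 Y_u, where Y_u := sup over v in ∪_{m=1}^n T_{m,u} with ‖v‖ ≤ 1 of ξ^T v, and T_{m,u} is the tangent cone of K_m at u. -/
open scoped RealInnerProductSpace

section OracleInequality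

variable {E : Type*} [NormedAddCommGroup E] [InnerProductSpace ℝ E]

theorem sq_norm_sub_sub_sq_le_two_inner {μ ξ x u : E} (h : ‖μ + ξ - x‖ ≤ ‖μ + ξ - u‖) :
    ‖x - μ‖ ^ 2 - ‖u - μ‖ ^ 2 ≤ 2 * ⟪ξ, x - u⟫ := by
  have hsq := pow_le_pow_left₀ (norm_nonneg _) h 2
  have hx : μ + ξ - x = ξ - (x - μ) := by abel
  have hu : μ + ξ - u = ξ - (u - μ) := by abel
  have hxu : x - u = (x - μ) - (u - μ) := by abel
  rw [hx, hu, norm_sub_sq_real ξ (x - μ), norm_sub_sq_real ξ (u - μ)] at hsq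
  rw [hxu, inner_sub_right]
  linarith

/-- Dividing the basic inequality `a² - b² ≤ 2⟪ξ, x - u⟫` by `a + b` turns `x - u` into a
direction of norm at most `1`, by the triangle inequality `‖x - u‖ ≤ a + b`. -/
theorem norm_sub_le_add_two_mul_of_inner_ray_le {μ ξ x u : E} {Y : ℝ}
    (hmin : ‖μ + ξ - x‖ ≤ ‖μ + ξ - u‖)
    (hY : ∀ t : ℝ, 0 ≤ t → ‖t • (x - u)‖ ≤ 1 → ⟪ξ, t • (x - u)⟫ ≤ Y) :
    ‖x - μ‖ ≤ ‖u - μ‖ + 2 * Y := by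
  set a := ‖x - μ‖
  set b := ‖u - μ‖
  have hY0 : 0 ≤ Y := by simpa using hY 0 le_rfl (by simp)
  rcases le_or_gt a b with hab | hba
  · linarith
  have hc : 0 < a + b := by linarith [norm_nonneg (u - μ)]
  have htri : ‖x - u‖ ≤ a + b := by
    simpa [a, b, norm_sub_rev u μ] using norm_sub_le_norm_sub_add_norm_sub x μ u
  have hunit : ‖(a + b)⁻¹ • (x - u)‖ ≤ 1 := by
    rw [norm_smul, Real.norm_of_nonneg (inv_nonneg.2 hc.le), inv_mul_le_one₀ hc]
    exact htri
  have hdir := hY _ (inv_nonneg.2 hc.le) hunit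
  rw [real_inner_smul_right, inv_mul_le_iff₀ hc] at hdir
  have hprod : (a - b) * (a + b) ≤ 2 * Y * (a + b) :=
    calc (a - b) * (a + b) = a ^ 2 - b ^ 2 := by ring
      _ ≤ 2 * ⟪ξ, x - u⟫ := sq_norm_sub_sub_sq_le_two_inner hmin
      _ ≤ 2 * Y * (a + b) := by linarith
  linarith [le_of_mul_le_mul_right hprod hc]

theorem bddAbove_inner_of_norm_le_one_s19 {ι : Type*} (A : ι → Set E) (ξ : E) :
    BddAbove {r : ℝ | ∃ i, ∃ v ∈ A i, ‖v‖ ≤ 1 ∧ r = ⟪ξ, v⟫} := by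
  refine ⟨‖ξ‖, ?_⟩
  rintro r ⟨i, v, -, hv, rfl⟩
  calc ⟪ξ, v⟫ ≤ ‖ξ‖ * ‖v‖ := real_inner_le_norm ξ v
    _ ≤ ‖ξ‖ := mul_le_of_le_one_right (norm_nonneg ξ) hv

end OracleInequality

theorem stmt19_general (n : ℕ)
    (Km : Fin n → Set (EuclideanSpace ℝ (Fin n)))
    (U : Set (EuclideanSpace ℝ (Fin n))) (hU : U = ⋃ m, Km m)
    (μ ξ y : EuclideanSpace ℝ (Fin n)) (hy : y = μ + ξ)
    (muhat : EuclideanSpace ℝ (Fin n))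
    (hmuhat : muhat ∈ U ∧ ∀ w ∈ U, ‖y - muhat‖ ≤ ‖y - w‖)
    (T : Fin n → EuclideanSpace ℝ (Fin n) → Set (EuclideanSpace ℝ (Fin n)))
    (hT : ∀ m u, T m u = closure {w : EuclideanSpace ℝ (Fin n) |
      ∃ t : ℝ, 0 ≤ t ∧ ∃ v ∈ Km m, w = t • (v - u)})
    (Y : EuclideanSpace ℝ (Fin n) → ℝ)
    (hY : ∀ u, Y u = sSup {r : ℝ |
      ∃ m : Fin n, ∃ v ∈ T m u, ‖v‖ ≤ 1 ∧ r = ⟪ξ, v⟫}) :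
    ∀ u ∈ U, ‖muhat - μ‖ ≤ ‖u - μ‖ + 2 * Y u := by
  intro u hu
  obtain ⟨hmuhatU, hmin⟩ := hmuhat
  obtain ⟨m, hm⟩ := Set.mem_iUnion.1 (hU ▸ hmuhatU)
  refine norm_sub_le_add_two_mul_of_inner_ray_le (hy ▸ hmin u hu) fun t ht hunit => ?_
  have hcone : t • (muhat - u) ∈ T m u := hT m u ▸ subset_closure ⟨t, ht, muhat, hm, rfl⟩
  rw [hY]
  exact le_csSup (bddAbove_inner_of_norm_le_one_s19 (fun m => T m u) ξ) ⟨m, _, hcone, hunit, rfl⟩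

/-- Deterministic oracle inequality for unimodal least squares: let
`U = ⋃_m K_m` be the set of unimodal sequences, `y = μ + ξ`, and `μ̂` a minimizer
over `U` of `‖y − ·‖`. Then for every `u ∈ U`,
`‖μ̂ − μ‖ ≤ ‖u − μ‖ + 2 Y_u`, where
`Y_u = sup {⟪ξ, v⟫ : v ∈ ⋃_m T_{m,u}, ‖v‖ ≤ 1}` and `T_{m,u}` is the tangent cone
of `K_m` at `u`. -/
theorem stmt19 (n : ℕ)
    (Km : Fin n → Set (EuclideanSpace ℝ (Fin n)))
    (hKm : ∀ m, Km m = {w : EuclideanSpace ℝ (Fin n) |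
      (∀ i i' : Fin n, i ≤ i' → i' ≤ m → w i' ≤ w i)
        ∧ ∀ i i' : Fin n, m ≤ i → i ≤ i' → w i ≤ w i'})
    (U : Set (EuclideanSpace ℝ (Fin n))) (hU : U = ⋃ m, Km m)
    (μ ξ y : EuclideanSpace ℝ (Fin n)) (hy : y = μ + ξ)
    (muhat : EuclideanSpace ℝ (Fin n))
    (hmuhat : muhat ∈ U ∧ ∀ w ∈ U, ‖y - muhat‖ ≤ ‖y - w‖)
    (T : Fin n → EuclideanSpace ℝ (Fin n) → Set (EuclideanSpace ℝ (Fin n)))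
    (hT : ∀ m u, T m u = closure {w : EuclideanSpace ℝ (Fin n) |
      ∃ t : ℝ, 0 ≤ t ∧ ∃ v ∈ Km m, w = t • (v - u)})
    (Y : EuclideanSpace ℝ (Fin n) → ℝ)
    (hY : ∀ u, Y u = sSup {r : ℝ |
      ∃ m : Fin n, ∃ v ∈ T m u, ‖v‖ ≤ 1 ∧ r = ⟪ξ, v⟫}) :
    ∀ u ∈ U, ‖muhat - μ‖ ≤ ‖u - μ‖ + 2 * Y u :=
  stmt19_general n Km U hU μ ξ y hy muhat hmuhat T hT Y hY
end
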